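/- Let L be an N×M real matrix (N ≥ 2) with rows L_1, ..., L_N and let L_{-1} be the submatrix of rows 2,...,N. Suppose the all-ones vector 1_N ∈ ℝ^N is not in the column span of L (viewing columns of L as vectors in ℝ^N). If there exists γ ∈ ℝ^{N−1} with ∑_i γ_i = 1 and L_1 = ∑_{i=1}^{N−1} γ_i L_{i+1}, then rank(L) < N−1 and rank(L_{-1}) = rank(L). -/

import Mathlib

theorem stmt_1 (N M : ℕ) (hN : 2 ≤ N) (L : Matrix (Fin N) (Fin M) ℝ)
    (Lm1 : Matrix (Fin (N - 1)) (Fin M) ℝ)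
    (hLm1 : ∀ (i : Fin (N - 1)) (j : Fin M), Lm1 i j = L ⟨i.1 + 1, by omega⟩ j)
    (hone : (fun _ : Fin N => (1 : ℝ)) ∉
      Submodule.span ℝ (Set.range fun j : Fin M => fun i : Fin N => L i j))
    (γ : Fin (N - 1) → ℝ) (hsum : ∑ i, γ i = 1)
    (hrep : ∀ j, L ⟨0, by omega⟩ j = ∑ i, γ i * L ⟨i.1 + 1, by omega⟩ j) :
    L.rank < N - 1 ∧ Lm1.rank = L.rank := by
  -- the left-null vector v
  set v : Fin N → ℝ := fun i => if h : i.1 = 0 then 1 else -γ ⟨i.1 - 1, by omega⟩ with hv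
  -- the linear functional x ↦ ∑ v i * x i
  let f : (Fin N → ℝ) →ₗ[ℝ] ℝ :=
  { toFun := fun x => ∑ i, v i * x i,
    map_add' := by intro x y; simp [mul_add, Finset.sum_add_distrib],
    map_smul' := by
      intro c x
      simp only [Pi.smul_apply, smul_eq_mul, RingHom.id_apply, Finset.mul_sum]
      exact Finset.sum_congr rfl fun i _ => by ring }
  have hsplit : ∀ (g : Fin N → ℝ), ∑ i, g i
      = g ⟨0, by omega⟩ + ∑ i : Fin (N - 1), g ⟨i.1 + 1, by omega⟩ := by
    intro g
    have : N = (N - 1) + 1 := by omega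
    rw [← Fin.sum_congr' g this.symm, Fin.sum_univ_succ]
    congr 1
  have hfone : f (fun _ => (1 : ℝ)) = 0 := by
    show ∑ i, v i * 1 = 0
    rw [hsplit (fun i => v i * 1)]
    simp [hv, hsum]
  have hfcol : ∀ j, f (fun i => L i j) = 0 := by
    intro j
    show ∑ i, v i * L i j = 0
    rw [hsplit (fun i => v i * L i j)]
    have : ∀ i : Fin (N - 1), v ⟨i.1 + 1, by omega⟩ * L ⟨i.1 + 1, by omega⟩ j
        = -(γ i * L ⟨i.1 + 1, by omega⟩ j) := by
      intro i; simp [hv]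
    rw [Finset.sum_congr rfl (fun i _ => this i), Finset.sum_neg_distrib]
    simp [hv, hrep j]
  have hfne : f ≠ 0 := by
    intro h
    set w : Fin N → ℝ := fun i => if i.1 = 0 then 1 else 0 with hw
    have hx : ∑ i, v i * w i = 0 := by
      rw [show (∑ i, v i * w i) = f w from rfl, h]; rfl
    rw [hsplit (fun i => v i * w i)] at hx
    simp [hv, hw] at hx
  -- ker f has dimension N - 1
  have hker : Module.finrank ℝ (LinearMap.ker f) = N - 1 := by
    have h1 := LinearMap.finrank_range_add_finrank_ker f
    have hr : Module.finrank ℝ (LinearMap.range f) = 1 := by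
      have : LinearMap.range f = ⊤ := by
        rcases eq_bot_or_eq_top (LinearMap.range f) with h | h
        · exact absurd (LinearMap.range_eq_bot.mp h) hfne
        · exact h
      rw [this]; simp
    rw [hr] at h1
    have : Module.finrank ℝ (Fin N → ℝ) = N := by simp
    omega
  -- column span S and augmented span T
  set S := Submodule.span ℝ (Set.range fun j : Fin M => fun i : Fin N => L i j) with hS
  set T := Submodule.span ℝ (insert (fun _ : Fin N => (1 : ℝ))
      (Set.range fun j : Fin M => fun i : Fin N => L i j)) with hT
  have hST : S < T := by
    refine lt_of_le_of_ne (Submodule.span_mono (Set.subset_insert _ _)) ?_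
    intro h
    exact hone (h ▸ Submodule.subset_span (Set.mem_insert _ _))
  have hTker : T ≤ LinearMap.ker f := by
    rw [hT]
    apply Submodule.span_le.mpr
    rintro x (rfl | ⟨j, rfl⟩)
    · exact hfone
    · exact hfcol j
  have hrankL : L.rank = Module.finrank ℝ S := by
    rw [Matrix.rank_eq_finrank_span_cols]
    rfl
  have h1 : L.rank < N - 1 := by
    rw [hrankL, ← hker]
    calc Module.finrank ℝ S < Module.finrank ℝ T := Submodule.finrank_lt_finrank_of_lt hST
    _ ≤ Module.finrank ℝ (LinearMap.ker f) := Submodule.finrank_mono hTker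
  refine ⟨h1, ?_⟩
  -- rank via rows
  rw [Matrix.rank_eq_finrank_span_row, Matrix.rank_eq_finrank_span_row]
  have hrowset : Set.range L = insert (L ⟨0, by omega⟩) (Set.range Lm1) := by
    ext x; constructor
    · rintro ⟨i, rfl⟩
      by_cases h : i.1 = 0
      · have hidx : i = (⟨0, by omega⟩ : Fin N) := Fin.ext (by simp only [Fin.val_mk]; omega)
        exact Set.mem_insert_iff.mpr (Or.inl (congrArg L hidx))
      · have hidx : (⟨i.1 - 1 + 1, by omega⟩ : Fin N) = i := Fin.ext (by simp only [Fin.val_mk]; omega)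
        refine Set.mem_insert_iff.mpr (Or.inr ⟨⟨i.1 - 1, by omega⟩, ?_⟩)
        funext j; rw [hLm1]
        show L ⟨i.1 - 1 + 1, by omega⟩ j = L i j
        rw [hidx]
    · rintro (rfl | ⟨i, rfl⟩)
      · exact ⟨⟨0, by omega⟩, rfl⟩
      · exact ⟨⟨i.1 + 1, by omega⟩, by funext j; rw [hLm1]⟩
  have hmem : L ⟨0, by omega⟩ ∈ Submodule.span ℝ (Set.range Lm1) := by
    have heq : L ⟨0, by omega⟩ = ∑ i : Fin (N - 1), γ i • Lm1 i := by
      funext j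
      rw [hrep j]
      simp only [Finset.sum_apply, Pi.smul_apply, smul_eq_mul]
      exact Finset.sum_congr rfl fun i _ => by rw [hLm1]
    rw [heq]
    exact Submodule.sum_mem _ fun i _ => Submodule.smul_mem _ _ (Submodule.subset_span ⟨i, rfl⟩)
  rw [show Lm1.row = Lm1 from rfl, show L.row = L from rfl, hrowset, Submodule.span_insert_eq_span hmem]
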